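/- arXiv:0712.0694 — 3 statements merged into one kernel-verified Lean document; each statement's English description precedes it below -/
import Mathlib

section
/- Let F : S^n → ℝ⁺ be smooth with D²F + F·I positive definite, and define φ(x) = F(x)x + (grad F)(x) and F*(x) = sup{⟨x,z⟩/F(z) : z ∈ S^n}. Then for all y, z ∈ S^n, ⟨φ(y), z⟩ ≤ F(z), with equality if and only if y = z. -/
open scoped RealInnerProductSpace
open Metric Set MeasureTheory

noncomputable section

/-- `ℝ^{n+1}`. -/
abbrev Euc (n : ℕ) := EuclideanSpace ℝ (Fin (n + 1))

/-- The unit sphere `S^n ⊂ ℝ^{n+1}`. -/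
def unitSphere (n : ℕ) : Set (Euc n) := sphere (0 : Euc n) 1

/-- The data of a smooth positive function `F` on `S^n` satisfying the convexity
condition `(D²F + F·Id) > 0`, encoded through its positively 1-homogeneous
extension to `ℝ^{n+1} \ {0}`: the Hessian of the extension is positive definite
on the tangent hyperplane of the sphere (its restriction there is exactly
`D²F + F·Id`). -/
structure IsAnisoNorm {n : ℕ} (F : Euc n → ℝ) : Prop where
  smooth : ContDiffOn ℝ (⊤ : ℕ∞) F {(0 : Euc n)}ᶜ
  homog : ∀ t : ℝ, 0 < t → ∀ x : Euc n, F (t • x) = t * F x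
  pos : ∀ x ∈ unitSphere n, 0 < F x
  convex : ∀ x ∈ unitSphere n, ∀ v : Euc n, ⟪v, x⟫ = 0 → v ≠ 0 →
    0 < ⟪fderiv ℝ (gradient F) x v, v⟫

namespace AnisoAux
open InnerProductSpace

variable {n : ℕ} {F : Euc n → ℝ}

lemma inner_grad (x v : Euc n) : ⟪gradient F x, v⟫ = fderiv ℝ F x v := by
  rw [gradient]; exact toDual_symm_apply

lemma mem_nhds_ne {x : Euc n} (hx : x ≠ 0) : ({(0:Euc n)}ᶜ : Set (Euc n)) ∈ nhds x :=
  isOpen_compl_singleton.mem_nhds hx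

lemma Fdiff (hF : IsAnisoNorm F) {x : Euc n} (hx : x ≠ 0) : DifferentiableAt ℝ F x :=
  ((hF.smooth.contDiffAt (mem_nhds_ne hx)).of_le (by simp) : ContDiffAt ℝ 1 F x).differentiableAt one_ne_zero

lemma gradCD (hF : IsAnisoNorm F) : ContDiffOn ℝ 1 (gradient F) {(0:Euc n)}ᶜ := by
  have h2 : ContDiffOn ℝ 2 F {(0:Euc n)}ᶜ := hF.smooth.of_le (WithTop.coe_le_coe.mpr (le_top : (2:ℕ∞) ≤ ⊤))
  have hfd : ContDiffOn ℝ 1 (fun x => fderiv ℝ F x) {(0:Euc n)}ᶜ :=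
    h2.fderiv_of_isOpen isOpen_compl_singleton (by norm_num)
  exact ((toDual ℝ (Euc n)).symm.contDiff.comp_contDiffOn hfd)

lemma gradDiff (hF : IsAnisoNorm F) {x : Euc n} (hx : x ≠ 0) :
    DifferentiableAt ℝ (gradient F) x :=
  ((gradCD hF).contDiffAt (mem_nhds_ne hx)).differentiableAt one_ne_zero

/-- Euler's relation. -/
lemma euler (hF : IsAnisoNorm F) {x : Euc n} (hx : x ≠ 0) : ⟪gradient F x, x⟫ = F x := by
  rw [inner_grad]
  have hc : HasDerivAt (fun t : ℝ => t • x) x 1 := by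
    simpa using (hasDerivAt_id (1:ℝ)).smul_const x
  have h1 : HasDerivAt (fun t : ℝ => F (t • x)) (fderiv ℝ F x x) 1 := by
    have hx1 : HasFDerivAt F (fderiv ℝ F x) ((1:ℝ) • x) := by
      rw [one_smul]; exact (Fdiff hF hx).hasFDerivAt
    have := hx1.comp_hasDerivAt 1 hc
    exact this
  have h2 : HasDerivAt (fun t : ℝ => F (t • x)) (F x) 1 := by
    have hm : HasDerivAt (fun t : ℝ => t * F x) (F x) 1 := by
      simpa using (hasDerivAt_id (1:ℝ)).mul_const (F x)
    apply hm.congr_of_eventuallyEq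
    filter_upwards [Ioi_mem_nhds (show (0:ℝ) < 1 by norm_num)] with t ht
    exact hF.homog t ht x
  exact h1.unique h2

/-- 0-homogeneity of the derivative. -/
lemma fderiv_homog (hF : IsAnisoNorm F) {t : ℝ} (ht : 0 < t) {x : Euc n} (hx : x ≠ 0) :
    fderiv ℝ F (t • x) = fderiv ℝ F x := by
  have htx : t • x ≠ 0 := smul_ne_zero (ne_of_gt ht) hx
  have hsm : HasFDerivAt (fun y : Euc n => t • y) (t • ContinuousLinearMap.id ℝ (Euc n)) x :=
    (hasFDerivAt_id x).const_smul t
  have h1 : HasFDerivAt (fun y : Euc n => F (t • y))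
      ((fderiv ℝ F (t • x)).comp (t • ContinuousLinearMap.id ℝ (Euc n))) x :=
    (Fdiff hF htx).hasFDerivAt.comp x hsm
  have h2 : HasFDerivAt (fun y : Euc n => t * F y) (t • fderiv ℝ F x) x :=
    (Fdiff hF hx).hasFDerivAt.const_mul t
  have heq : (fun y : Euc n => F (t • y)) = fun y : Euc n => t * F y := by
    funext y; exact hF.homog t ht y
  rw [heq] at h1
  have := h1.unique h2
  ext v
  have hv := congrFun (congrArg DFunLike.coe this) v
  simp only [ContinuousLinearMap.comp_apply, ContinuousLinearMap.smul_apply,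
    ContinuousLinearMap.id_apply, ContinuousLinearMap.coe_smul'] at hv ⊢
  have : t * fderiv ℝ F (t • x) v = t * fderiv ℝ F x v := by
    simpa [ContinuousLinearMap.map_smul, smul_eq_mul] using hv
  exact mul_left_cancel₀ (ne_of_gt ht) this

lemma grad_homog (hF : IsAnisoNorm F) {t : ℝ} (ht : 0 < t) {x : Euc n} (hx : x ≠ 0) :
    gradient F (t • x) = gradient F x := by
  rw [gradient, gradient, fderiv_homog hF ht hx]

/-- The Hessian annihilates the radial direction on the right slot (as input). -/
lemma hess_rad_input (hF : IsAnisoNorm F) {x : Euc n} (hx : x ≠ 0) :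
    fderiv ℝ (gradient F) x x = 0 := by
  have hc : HasDerivAt (fun s : ℝ => s • x) x 1 := by
    simpa using (hasDerivAt_id (1:ℝ)).smul_const x
  have hx1 : HasFDerivAt (gradient F) (fderiv ℝ (gradient F) x) ((1:ℝ) • x) := by
    rw [one_smul]; exact (gradDiff hF hx).hasFDerivAt
  have h1 : HasDerivAt (fun s : ℝ => gradient F (s • x)) (fderiv ℝ (gradient F) x x) 1 := by
    have := hx1.comp_hasDerivAt 1 hc
    exact this
  have h2 : HasDerivAt (fun s : ℝ => gradient F (s • x)) 0 1 := by
    apply (hasDerivAt_const (1:ℝ) (gradient F x)).congr_of_eventuallyEq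
    filter_upwards [Ioi_mem_nhds (show (0:ℝ) < 1 by norm_num)] with s hs
    exact grad_homog hF hs hx
  exact h1.unique h2

/-- Scaling of the Hessian. -/
lemma hess_scaling (hF : IsAnisoNorm F) {t : ℝ} (ht : 0 < t) {x : Euc n} (hx : x ≠ 0)
    (v : Euc n) :
    fderiv ℝ (gradient F) (t • x) v = t⁻¹ • fderiv ℝ (gradient F) x v := by
  have htx : t • x ≠ 0 := smul_ne_zero (ne_of_gt ht) hx
  have hsm : HasFDerivAt (fun y : Euc n => t • y) (t • ContinuousLinearMap.id ℝ (Euc n)) x :=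
    (hasFDerivAt_id x).const_smul t
  have h1 : HasFDerivAt (fun y : Euc n => gradient F (t • y))
      ((fderiv ℝ (gradient F) (t • x)).comp (t • ContinuousLinearMap.id ℝ (Euc n))) x :=
    (gradDiff hF htx).hasFDerivAt.comp x hsm
  have h2 : HasFDerivAt (gradient F) (fderiv ℝ (gradient F) x) x := (gradDiff hF hx).hasFDerivAt
  have h1' : HasFDerivAt (gradient F)
      ((fderiv ℝ (gradient F) (t • x)).comp (t • ContinuousLinearMap.id ℝ (Euc n))) x := by
    apply h1.congr_of_eventuallyEq
    filter_upwards [mem_nhds_ne hx] with y hy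
    exact (grad_homog hF ht hy).symm
  have := h2.unique h1'
  have hv := congrFun (congrArg DFunLike.coe this) v
  simp only [ContinuousLinearMap.comp_apply, ContinuousLinearMap.smul_apply,
    ContinuousLinearMap.id_apply] at hv
  rw [ContinuousLinearMap.map_smul] at hv
  rw [hv, smul_smul, inv_mul_cancel₀ (ne_of_gt ht), one_smul]

/-- The Hessian annihilates the radial direction in the output inner product. -/
lemma hess_rad_output (hF : IsAnisoNorm F) {x : Euc n} (hx : x ≠ 0) (w : Euc n) :
    ⟪fderiv ℝ (gradient F) x w, x⟫ = 0 := by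
  -- differentiate the Euler identity ⟪∇F y, y⟫ = F y
  have hA : HasFDerivAt (fun y : Euc n => ⟪gradient F y, y⟫)
      ((fderivInnerCLM ℝ (gradient F x, x)).comp
        ((fderiv ℝ (gradient F) x).prod (ContinuousLinearMap.id ℝ (Euc n)))) x :=
    HasFDerivAt.inner ℝ (gradDiff hF hx).hasFDerivAt (hasFDerivAt_id x)
  have hA' : HasFDerivAt F
      ((fderivInnerCLM ℝ (gradient F x, x)).comp
        ((fderiv ℝ (gradient F) x).prod (ContinuousLinearMap.id ℝ (Euc n)))) x := by
    apply hA.congr_of_eventuallyEq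
    filter_upwards [mem_nhds_ne hx] with y hy
    exact (euler hF hy).symm
  have := (Fdiff hF hx).hasFDerivAt.unique hA'
  have hv := congrFun (congrArg DFunLike.coe this) w
  simp only [ContinuousLinearMap.comp_apply, ContinuousLinearMap.prod_apply,
    ContinuousLinearMap.id_apply, fderivInnerCLM_apply] at hv
  rw [← inner_grad] at hv
  linarith [hv]

/-- Positivity of the Hessian quadratic form off the radial direction. -/
lemma hess_pos (hF : IsAnisoNorm F) {x : Euc n} (hx : x ≠ 0) {v : Euc n}
    (hv : ∀ c : ℝ, v ≠ c • x) : 0 < ⟪fderiv ℝ (gradient F) x v, v⟫ := by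
  set r : ℝ := ‖x‖ with hr
  have hr0 : 0 < r := norm_pos_iff.mpr hx
  set u : Euc n := r⁻¹ • x with hu
  have hun : ‖u‖ = 1 := by
    rw [hu, norm_smul, norm_inv, norm_norm, inv_mul_cancel₀ (ne_of_gt hr0)]
  have huS : u ∈ unitSphere n := by
    simpa [unitSphere, mem_sphere_iff_norm] using hun
  have hu0 : u ≠ 0 := by
    intro h; rw [h, norm_zero] at hun; norm_num at hun
  have hxu : x = r • u := by
    rw [hu, smul_smul, mul_inv_cancel₀ (ne_of_gt hr0), one_smul]
  set a : ℝ := ⟪v, u⟫ with ha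
  set w : Euc n := v - a • u with hw
  have huu : ⟪u, u⟫ = (1:ℝ) := by
    rw [real_inner_self_eq_norm_sq, hun]; norm_num
  have hwu : ⟪w, u⟫ = 0 := by
    rw [hw, inner_sub_left, real_inner_smul_left, huu, mul_one, ha, sub_self]
  have hw0 : w ≠ 0 := by
    intro h
    have : v = a • u := by rwa [hw, sub_eq_zero] at h
    exact hv (a * r⁻¹) (by rw [this, hu, smul_smul])
  set H := fderiv ℝ (gradient F) x with hH
  have hHu : H u = 0 := by
    rw [hu, _root_.map_smul, hess_rad_input hF hx, smul_zero]
  have hHw_scale : H w = r⁻¹ • fderiv ℝ (gradient F) u w := by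
    rw [hH, hxu]; exact hess_scaling hF hr0 hu0 w
  have hvwu : v = w + a • u := by rw [hw]; abel
  have hHv : H v = H w := by
    rw [hvwu, map_add, _root_.map_smul, hHu, smul_zero, add_zero]
  have hHwu : ⟪H w, u⟫ = 0 := by
    rw [hu, real_inner_smul_right, hH, hess_rad_output hF hx w, mul_zero]
  have hHww : 0 < ⟪H w, w⟫ := by
    rw [hHw_scale, real_inner_smul_left]
    exact mul_pos (inv_pos.mpr hr0) (hF.convex u huS w hwu hw0)
  calc (0:ℝ) < ⟪H w, w⟫ := hHww
    _ = ⟪H v, v⟫ := by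
        rw [hHv, hvwu, inner_add_right, real_inner_smul_right, hHwu, mul_zero, add_zero]

lemma strict_ineq (hF : IsAnisoNorm F) {y z : Euc n} (hy : ‖y‖ = 1) (hz : ‖z‖ = 1)
    (hyz : z ≠ y) (hyz' : z ≠ -y) : ⟪gradient F y, z⟫ < F z := by
  have hy0 : y ≠ 0 := by intro h; rw [h, norm_zero] at hy; norm_num at hy
  set v : Euc n := z - y with hv
  have hv0 : v ≠ 0 := sub_ne_zero.mpr hyz
  set c : ℝ → Euc n := fun t => y + t • v with hc
  have hc0 : c 0 = y := by simp [hc]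
  have hc1 : c 1 = z := by simp [hc, hv]
  have hcne : ∀ t ∈ Icc (0:ℝ) 1, c t ≠ 0 := by
    rintro t ⟨h0, h1⟩ h
    have h' : c t = 0 := h
    rw [hc, hv] at h'
    have hct : (1 - t) • y = -(t • z) := by
      linear_combination (norm := module) h'
    have hn := congrArg norm hct
    rw [norm_smul, norm_neg, norm_smul, hy, hz, mul_one, mul_one,
      Real.norm_eq_abs, Real.norm_eq_abs, abs_of_nonneg (by linarith), abs_of_nonneg h0] at hn
    have ht2 : t = 1/2 := by linarith
    rw [ht2] at hct
    have : y = -z := by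
      have h2 : ((1:ℝ)/2) • y = ((1:ℝ)/2) • (-z) := by
        rw [show (1:ℝ) - 1/2 = 1/2 by norm_num] at hct
        rw [hct, smul_neg]
      exact smul_right_injective (Euc n) (by norm_num) h2
    exact hyz' (by rw [this, neg_neg])
  have h_np : ∀ t : ℝ, ∀ μ : ℝ, v ≠ μ • c t := by
    intro t μ hμ
    rcases eq_or_ne μ 0 with h0 | h0
    · rw [h0, zero_smul] at hμ; exact hv0 hμ
    have key : (1 - μ * t) • v = μ • y := by
      rw [hc] at hμ
      linear_combination (norm := module) hμ
    rcases eq_or_ne (1 - μ * t) 0 with he | he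
    · rw [he, zero_smul] at key
      exact hy0 (by
        have := key.symm
        exact (smul_eq_zero.mp this).resolve_left h0)
    · set β : ℝ := μ / (1 - μ * t) with hβ
      have hvy : v = β • y := by
        have : (1 - μ * t)⁻¹ • ((1 - μ * t) • v) = (1 - μ * t)⁻¹ • (μ • y) := by rw [key]
        rw [smul_smul, inv_mul_cancel₀ he, one_smul, smul_smul] at this
        rw [hβ, div_eq_inv_mul]
        exact this
      have hzy : z = (1 + β) • y := by
        rw [← sub_add_cancel z y, ← hv, hvy, add_smul, one_smul, add_comm]
      have hn := congrArg norm hzy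
      rw [hz, norm_smul, hy, mul_one, Real.norm_eq_abs] at hn
      rcases abs_eq (by norm_num : (0:ℝ) ≤ 1) |>.mp hn.symm with h1 | h1
      · rw [h1] at hzy; rw [one_smul] at hzy; exact hyz hzy
      · rw [h1] at hzy; rw [neg_one_smul] at hzy; exact hyz' hzy
  set p : Euc n := gradient F y with hp
  set g : ℝ → ℝ := fun t => F (c t) - ⟪p, c t⟫ with hg
  set h : ℝ → ℝ := fun t => ⟪gradient F (c t) - p, v⟫ with hh
  have hcder : ∀ t : ℝ, HasDerivAt c v t := by
    intro t
    simpa [hc] using ((hasDerivAt_id t).smul_const v).const_add y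
  have hgder : ∀ t : ℝ, c t ≠ 0 → HasDerivAt g (h t) t := by
    intro t hct
    have h1 : HasDerivAt (fun s => F (c s)) (fderiv ℝ F (c t) v) t :=
      (Fdiff hF hct).hasFDerivAt.comp_hasDerivAt t (hcder t)
    have h2 : HasDerivAt (fun s => ⟪p, c s⟫) ⟪p, v⟫ t := by
      simpa using HasDerivAt.inner ℝ (hasDerivAt_const t p) (hcder t)
    have h3 := h1.sub h2
    rw [← inner_grad] at h3
    have : h t = ⟪gradient F (c t), v⟫ - ⟪p, v⟫ := by simp only [hh]; rw [inner_sub_left]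
    rw [this]
    exact h3
  have hhder : ∀ t : ℝ, c t ≠ 0 →
      HasDerivAt h ⟪fderiv ℝ (gradient F) (c t) v, v⟫ t := by
    intro t hct
    have h1 : HasDerivAt (fun s => gradient F (c s)) (fderiv ℝ (gradient F) (c t) v) t :=
      (gradDiff hF hct).hasFDerivAt.comp_hasDerivAt t (hcder t)
    have h2 := h1.sub_const p
    simpa using HasDerivAt.inner ℝ h2 (hasDerivAt_const t v)
  have hmono_h : StrictMonoOn h (Icc 0 1) := by
    apply strictMonoOn_of_deriv_pos (convex_Icc 0 1)
    · intro t ht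
      exact ((hhder t (hcne t ht)).differentiableAt.continuousAt).continuousWithinAt
    · intro t ht
      rw [interior_Icc] at ht
      have hct := hcne t ⟨le_of_lt ht.1, le_of_lt ht.2⟩
      rw [(hhder t hct).deriv]
      exact hess_pos hF hct (fun μ => h_np t μ)
  have hh0 : h 0 = 0 := by rw [hh]; simp [hc0, hp]
  have hpos : ∀ t ∈ Ioc (0:ℝ) 1, 0 < h t := by
    rintro t ⟨h0t, ht1⟩
    have := hmono_h (left_mem_Icc.mpr (by norm_num)) ⟨le_of_lt h0t, ht1⟩ h0t
    rwa [hh0] at this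
  have hmono_g : StrictMonoOn g (Icc 0 1) := by
    apply strictMonoOn_of_deriv_pos (convex_Icc 0 1)
    · intro t ht
      exact ((hgder t (hcne t ht)).differentiableAt.continuousAt).continuousWithinAt
    · intro t ht
      rw [interior_Icc] at ht
      have hct := hcne t ⟨le_of_lt ht.1, le_of_lt ht.2⟩
      rw [(hgder t hct).deriv]
      exact hpos t ⟨ht.1, le_of_lt ht.2⟩
  have hg01 : g 0 < g 1 :=
    hmono_g (left_mem_Icc.mpr (by norm_num)) (right_mem_Icc.mpr (by norm_num)) (by norm_num)
  have hg0 : g 0 = 0 := by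
    rw [hg]; simp only [hc0]
    rw [hp, euler hF hy0, sub_self]
  have hg1 : g 1 = F z - ⟪p, z⟫ := by rw [hg]; simp only [hc1]
  rw [hg0, hg1] at hg01
  rw [hp] at *
  linarith

end AnisoAux

/-- The map `φ(x) = F(x)·x + (grad_{S^n} F)_x`; for the 1-homogeneous extension
this is exactly the gradient of `F`. -/
def wulffMap {n : ℕ} (F : Euc n → ℝ) : Euc n → Euc n := gradient F

/-- The Wulff shape `W_F = φ(S^n)`. -/
def wulffShape {n : ℕ} (F : Euc n → ℝ) : Set (Euc n) := wulffMap F '' unitSphere n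

/-- The dual function `F*(x) = sup { ⟨x,z⟩ / F(z) : z ∈ S^n }`. -/
def dualF {n : ℕ} (F : Euc n → ℝ) (x : Euc n) : ℝ :=
  ⨆ z : unitSphere n, ⟪x, (z : Euc n)⟫ / F (z : Euc n)

/-- For all `y, z ∈ S^n`, `⟨φ(y), z⟩ ≤ F(z)`, with equality iff `y = z`. -/
theorem stmt_0 {n : ℕ} (F : Euc n → ℝ) (hF : IsAnisoNorm F)
    (y z : Euc n) (hy : y ∈ unitSphere n) (hz : z ∈ unitSphere n) :
    ⟪wulffMap F y, z⟫ ≤ F z ∧ (⟪wulffMap F y, z⟫ = F z ↔ y = z) := by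
  have hy1 : ‖y‖ = 1 := by simpa [unitSphere, mem_sphere_iff_norm] using hy
  have hz1 : ‖z‖ = 1 := by simpa [unitSphere, mem_sphere_iff_norm] using hz
  have hy0 : y ≠ 0 := by intro h; rw [h, norm_zero] at hy1; norm_num at hy1
  have heu : ⟪gradient F y, y⟫ = F y := AnisoAux.euler hF hy0
  by_cases hzy : y = z
  · subst hzy
    exact ⟨le_of_eq heu, ⟨fun _ => rfl, fun _ => heu⟩⟩
  · have hstrict : ⟪gradient F y, z⟫ < F z := by
      by_cases hneg : z = -y
      · subst hneg
        rw [inner_neg_right, heu]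
        have hFy : 0 < F y := hF.pos y hy
        have hFz : 0 < F (-y) := hF.pos (-y) hz
        linarith
      · exact AnisoAux.strict_ineq hF hy1 hz1 (fun h => hzy h.symm) hneg
    exact ⟨le_of_lt hstrict, ⟨fun h => absurd h (ne_of_lt hstrict), fun h => absurd h hzy⟩⟩
end
end

section
/- Let F : S^n → ℝ⁺ be smooth with D²F + F·I positive definite, φ(x) = F(x)x + (grad F)(x), and F*(x) = sup{⟨x,z⟩/F(z) : z ∈ S^n}. Then for every x ∈ ℝ^{n+1}\{0} and y ∈ S^n, ⟨x, y⟩ ≤ F*(x)·F(y), with equality if and only if x = F*(x)·φ(y). -/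
open scoped RealInnerProductSpace
open Metric Set MeasureTheory

noncomputable section

/-- The inner product with the gradient is the Fréchet derivative. -/
lemma inner_gradient_eq {n : ℕ} (F : Euc n → ℝ) (y v : Euc n) :
    ⟪gradient F y, v⟫ = fderiv ℝ F y v := by
  rw [gradient]
  exact InnerProductSpace.toDual_symm_apply

/-- The normalization of a nonzero vector lies on the unit sphere. -/
lemma normalize_mem_unitSphere {n : ℕ} {z : Euc n} (hz : z ≠ 0) :
    ‖z‖⁻¹ • z ∈ unitSphere n := by
  have hn : (0 : ℝ) < ‖z‖ := norm_pos_iff.mpr hz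
  simp [unitSphere, mem_sphere_zero_iff_norm, norm_smul, abs_of_pos (inv_pos.mpr hn),
    inv_mul_cancel₀ hn.ne']

/-- Positivity of `F` on all nonzero vectors. -/
lemma IsAnisoNorm.pos_of_ne_zero {n : ℕ} {F : Euc n → ℝ} (hF : IsAnisoNorm F)
    {z : Euc n} (hz : z ≠ 0) : 0 < F z := by
  have hn : (0 : ℝ) < ‖z‖ := norm_pos_iff.mpr hz
  have h1 := hF.homog ‖z‖ hn (‖z‖⁻¹ • z)
  rw [smul_smul, mul_inv_cancel₀ hn.ne', one_smul] at h1
  have h2 := hF.pos _ (normalize_mem_unitSphere hz)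
  rw [h1]
  positivity

/-- Euler's identity for the 1-homogeneous function `F`. -/
lemma IsAnisoNorm.euler {n : ℕ} {F : Euc n → ℝ} (hF : IsAnisoNorm F) {y : Euc n}
    (hy : y ≠ 0) (hd : DifferentiableAt ℝ F y) : fderiv ℝ F y y = F y := by
  have h1 : HasDerivAt (fun t : ℝ => t • y) y 1 := by
    simpa using (hasDerivAt_id (1 : ℝ)).smul_const y
  have hd' : HasFDerivAt F (fderiv ℝ F y) ((1 : ℝ) • y) := by
    rw [one_smul]; exact hd.hasFDerivAt
  have h2 : HasDerivAt (fun t : ℝ => F (t • y)) (fderiv ℝ F y y) 1 :=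
    hd'.comp_hasDerivAt 1 h1
  have h4 : (fun t : ℝ => t * F y) =ᶠ[nhds (1 : ℝ)] fun t : ℝ => F (t • y) := by
    filter_upwards [Ioi_mem_nhds (zero_lt_one)] with t ht
    exact (hF.homog t ht y).symm
  have h2' : HasDerivAt (fun t : ℝ => t * F y) (fderiv ℝ F y y) 1 :=
    h2.congr_of_eventuallyEq h4
  have h3 : HasDerivAt (fun t : ℝ => t * F y) (F y) 1 := by
    simpa using (hasDerivAt_id (1 : ℝ)).mul_const (F y)
  exact h2'.unique h3

/-- For every `x ∈ ℝ^{n+1} \ {0}` and `y ∈ S^n`, `⟨x, y⟩ ≤ F*(x)·F(y)`,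
with equality iff `x = F*(x)·φ(y)`. -/
theorem stmt_1 {n : ℕ} (F : Euc n → ℝ) (hF : IsAnisoNorm F)
    (x : Euc n) (hx : x ≠ 0) (y : Euc n) (hy : y ∈ unitSphere n) :
    ⟪x, y⟫ ≤ dualF F x * F y ∧
      (⟪x, y⟫ = dualF F x * F y ↔ x = dualF F x • wulffMap F y) := by
  have hy0 : y ≠ 0 := by
    have : ‖y‖ = 1 := by simpa [unitSphere, mem_sphere_zero_iff_norm] using hy
    intro h; rw [h] at this; simp at this
  have hFy : 0 < F y := hF.pos y hy
  -- the function being supped is bounded above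
  have hsub : unitSphere n ⊆ {(0 : Euc n)}ᶜ := by
    intro z hz
    have : ‖z‖ = 1 := by simpa [unitSphere, mem_sphere_zero_iff_norm] using hz
    simp only [mem_compl_iff, mem_singleton_iff]
    intro h; rw [h] at this; simp at this
  have hcont : ContinuousOn (fun z : Euc n => ⟪x, z⟫ / F z) (unitSphere n) := by
    apply ContinuousOn.div
    · exact (continuous_const.inner continuous_id).continuousOn
    · exact (hF.smooth.continuousOn).mono hsub
    · intro z hz
      exact (hF.pos z hz).ne'
  have hcpt : IsCompact (unitSphere n) := isCompact_sphere 0 1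
  have bdd : BddAbove (Set.range fun z : unitSphere n => ⟪x, (z : Euc n)⟫ / F (z : Euc n)) := by
    have : (Set.range fun z : unitSphere n => ⟪x, (z : Euc n)⟫ / F (z : Euc n)) =
        (fun z : Euc n => ⟪x, z⟫ / F z) '' unitSphere n := by
      ext a
      simp [Set.mem_image]
    rw [this]
    exact (hcpt.image_of_continuousOn hcont).bddAbove
  have hle : ∀ z ∈ unitSphere n, ⟪x, z⟫ / F z ≤ dualF F x := by
    intro z hz
    exact le_ciSup bdd (⟨z, hz⟩ : unitSphere n)
  have hineq : ⟪x, y⟫ ≤ dualF F x * F y := by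
    have := hle y hy
    calc ⟪x, y⟫ = (⟪x, y⟫ / F y) * F y := by field_simp
    _ ≤ dualF F x * F y := by nlinarith
  -- quotient is scale invariant
  have hscale : ∀ z : Euc n, z ≠ 0 → ⟪x, z⟫ / F z ≤ dualF F x := by
    intro z hz
    have hn : (0 : ℝ) < ‖z‖ := norm_pos_iff.mpr hz
    have hw := normalize_mem_unitSphere hz
    have h1 : ⟪x, ‖z‖⁻¹ • z⟫ = ‖z‖⁻¹ * ⟪x, z⟫ := real_inner_smul_right x z ‖z‖⁻¹
    have h2 : F (‖z‖⁻¹ • z) = ‖z‖⁻¹ * F z := hF.homog ‖z‖⁻¹ (inv_pos.mpr hn) z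
    have := hle _ hw
    rw [h1, h2, mul_div_mul_left _ _ (by positivity : (‖z‖⁻¹ : ℝ) ≠ 0)] at this
    exact this
  have hdF : DifferentiableAt ℝ F y :=
    ((hF.smooth.contDiffAt (isOpen_compl_singleton.mem_nhds hy0)).differentiableAt (by simp))
  refine ⟨hineq, ?_, ?_⟩
  · -- equality implies x = F*(x) • ∇F(y)
    intro h
    set c := dualF F x with hc
    -- y is a local max of H z = ⟪x,z⟫ - c * F z
    have hmax : IsLocalMax (fun z : Euc n => ⟪x, z⟫ - c * F z) y := by
      filter_upwards [isOpen_compl_singleton.mem_nhds hy0] with z hz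
      have hz0 : z ≠ 0 := hz
      have hFz : 0 < F z := hF.pos_of_ne_zero hz0
      have h1 : ⟪x, z⟫ ≤ c * F z := by
        have := hscale z hz0
        calc ⟪x, z⟫ = (⟪x, z⟫ / F z) * F z := by field_simp
        _ ≤ c * F z := by nlinarith
      have h2 : ⟪x, y⟫ - c * F y = 0 := by rw [h]; ring
      linarith
    have hxder : HasFDerivAt (fun z : Euc n => ⟪x, z⟫) (innerSL ℝ x) y :=
      (innerSL ℝ x).hasFDerivAt
    have hHder : HasFDerivAt (fun z : Euc n => ⟪x, z⟫ - c * F z)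
        (innerSL ℝ x - c • fderiv ℝ F y) y :=
      hxder.sub (hdF.hasFDerivAt.const_mul c)
    have hzero : (innerSL ℝ x - c • fderiv ℝ F y : Euc n →L[ℝ] ℝ) = 0 := by
      rw [← hHder.fderiv]
      exact hmax.fderiv_eq_zero
    have key : ∀ v : Euc n, ⟪x, v⟫ = c * fderiv ℝ F y v := by
      intro v
      have := congrFun (congrArg (fun L : Euc n →L[ℝ] ℝ => (L : Euc n → ℝ)) hzero) v
      simp only [ContinuousLinearMap.sub_apply, ContinuousLinearMap.smul_apply,
        ContinuousLinearMap.zero_apply, innerSL_apply_apply, smul_eq_mul] at this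
      linarith
    have final : ∀ v : Euc n, ⟪x - c • wulffMap F y, v⟫ = 0 := by
      intro v
      rw [inner_sub_left, real_inner_smul_left, wulffMap, inner_gradient_eq, key v]
      ring
    have := final (x - c • wulffMap F y)
    rw [real_inner_self_eq_norm_sq] at this
    have : x - c • wulffMap F y = 0 := by
      by_contra hne
      have : (0 : ℝ) < ‖x - c • wulffMap F y‖ := norm_pos_iff.mpr hne
      nlinarith
    exact sub_eq_zero.mp this
  · -- converse: x = F*(x) • ∇F(y) implies equality
    intro h
    have heuler : ⟪wulffMap F y, y⟫ = F y := by
      rw [wulffMap, inner_gradient_eq]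
      exact hF.euler hy0 hdF
    nth_rewrite 1 [h]
    rw [real_inner_smul_left, heuler]
end
end

section
/- For F : S^n → ℝ⁺ smooth with D²F + F·I positive definite, the triangle inequality F*(x+y) ≤ F*(x) + F*(y) is an equality if and only if x = 0, or y = 0, or x = k·y for some k > 0. -/
open scoped RealInnerProductSpace
open Metric Set MeasureTheory

noncomputable section

/-! ### Auxiliary lemmas -/

instance instUnitSphereNonempty {n : ℕ} : Nonempty ↥(unitSphere n) := by
  rw [nonempty_subtype]
  exact NormedSpace.sphere_nonempty.mpr zero_le_one

lemma aniso_sphere_ne_zero {n : ℕ} {z : Euc n} (hz : z ∈ unitSphere n) : z ≠ 0 := by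
  have : ‖z‖ = 1 := mem_sphere_zero_iff_norm.mp hz
  intro h; rw [h, norm_zero] at this; norm_num at this

lemma aniso_cont {n : ℕ} {F : Euc n → ℝ} (hF : IsAnisoNorm F) (x : Euc n) :
    ContinuousOn (fun z : Euc n => ⟪x, z⟫ / F z) (unitSphere n) :=
  ContinuousOn.div ((continuous_const.inner continuous_id).continuousOn)
    (hF.smooth.continuousOn.mono (by intro z hz; simpa using aniso_sphere_ne_zero hz))
    (fun z hz => (hF.pos z hz).ne')

lemma aniso_exists_max {n : ℕ} {F : Euc n → ℝ} (hF : IsAnisoNorm F) (x : Euc n) :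
    ∃ z₀ ∈ unitSphere n, dualF F x = ⟪x, z₀⟫ / F z₀ ∧
      ∀ z ∈ unitSphere n, ⟪x, z⟫ / F z ≤ dualF F x := by
  obtain ⟨z₀, hz₀, hmax⟩ := (isCompact_sphere (0 : Euc n) 1).exists_isMaxOn
    (NormedSpace.sphere_nonempty.mpr zero_le_one) (aniso_cont hF x)
  have hmax' : ∀ z ∈ unitSphere n, ⟪x, z⟫ / F z ≤ ⟪x, z₀⟫ / F z₀ := fun z hz => hmax hz
  have hbdd : BddAbove (Set.range fun z : unitSphere n => ⟪x, (z : Euc n)⟫ / F z) :=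
    ⟨⟪x, z₀⟫ / F z₀, by rintro _ ⟨z, rfl⟩; exact hmax' z z.2⟩
  have heq : dualF F x = ⟪x, z₀⟫ / F z₀ :=
    le_antisymm (ciSup_le fun z => hmax' z z.2) (le_ciSup hbdd ⟨z₀, hz₀⟩)
  exact ⟨z₀, hz₀, heq, fun z hz => heq ▸ hmax' z hz⟩

lemma aniso_dual_zero {n : ℕ} (F : Euc n → ℝ) : dualF F 0 = 0 := by
  unfold dualF
  simp

lemma aniso_dual_pos {n : ℕ} {F : Euc n → ℝ} (hF : IsAnisoNorm F) {x : Euc n}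
    (hx : x ≠ 0) : 0 < dualF F x := by
  obtain ⟨z₀, hz₀, _, hb⟩ := aniso_exists_max hF x
  have hxn : (0 : ℝ) < ‖x‖ := norm_pos_iff.mpr hx
  set z : Euc n := ‖x‖⁻¹ • x with hzdef
  have hz : z ∈ unitSphere n := by
    rw [unitSphere, mem_sphere_zero_iff_norm, hzdef, norm_smul, norm_inv, norm_norm]
    field_simp
  have hip : ⟪x, z⟫ = ‖x‖ := by
    rw [hzdef, real_inner_smul_right, real_inner_self_eq_norm_sq]
    field_simp
  have : (0 : ℝ) < ⟪x, z⟫ / F z := div_pos (hip ▸ hxn) (hF.pos z hz)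
  exact lt_of_lt_of_le this (hb z hz)

lemma aniso_dual_smul {n : ℕ} {F : Euc n → ℝ} (hF : IsAnisoNorm F) {t : ℝ}
    (ht : 0 < t) (x : Euc n) : dualF F (t • x) = t * dualF F x := by
  obtain ⟨z₀, hz₀, heq, hb⟩ := aniso_exists_max hF x
  have key : ∀ z : Euc n, ⟪t • x, z⟫ / F z = t * (⟪x, z⟫ / F z) := by
    intro z
    rw [real_inner_smul_left, mul_div_assoc]
  have hle : dualF F (t • x) ≤ t * dualF F x := by
    refine ciSup_le fun z => ?_
    rw [key]
    exact mul_le_mul_of_nonneg_left (hb z z.2) ht.le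
  have hbdd : BddAbove (Set.range fun z : unitSphere n => ⟪t • x, (z : Euc n)⟫ / F z) :=
    ⟨t * dualF F x, by
      rintro _ ⟨z, rfl⟩
      show ⟪t • x, (z : Euc n)⟫ / F (z : Euc n) ≤ t * dualF F x
      rw [key]
      exact mul_le_mul_of_nonneg_left (hb z z.2) ht.le⟩
  have hge : t * dualF F x ≤ dualF F (t • x) := by
    have := le_ciSup hbdd (⟨z₀, hz₀⟩ : unitSphere n)
    rw [key z₀] at this
    rwa [heq]
  linarith

lemma aniso_lagrange {n : ℕ} {F : Euc n → ℝ} (hF : IsAnisoNorm F) {x z₀ : Euc n}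
    (hz₀ : z₀ ∈ unitSphere n)
    (hb : ∀ z ∈ unitSphere n, ⟪x, z⟫ / F z ≤ dualF F x)
    (heq : ⟪x, z₀⟫ / F z₀ = dualF F x) :
    innerSL ℝ x = dualF F x • fderiv ℝ F z₀ := by
  set c := dualF F x with hc
  have hFz₀ : 0 < F z₀ := hF.pos z₀ hz₀
  -- global bound on the punctured space
  have bound : ∀ w : Euc n, w ≠ 0 → ⟪x, w⟫ ≤ c * F w := by
    intro w hw
    have ht : (0 : ℝ) < ‖w‖ := norm_pos_iff.mpr hw
    set z : Euc n := ‖w‖⁻¹ • w with hzdef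
    have hz : z ∈ unitSphere n := by
      rw [unitSphere, mem_sphere_zero_iff_norm, hzdef, norm_smul, norm_inv, norm_norm]
      field_simp
    have hwz : w = ‖w‖ • z := by rw [hzdef, smul_inv_smul₀ ht.ne']
    have h1 : ⟪x, z⟫ ≤ c * F z := (div_le_iff₀ (hF.pos z hz)).mp (hb z hz)
    calc ⟪x, w⟫ = ⟪x, ‖w‖ • z⟫ := by rw [← hwz]
    _ = ‖w‖ * ⟪x, z⟫ := real_inner_smul_right x z ‖w‖
    _ ≤ ‖w‖ * (c * F z) := mul_le_mul_of_nonneg_left h1 ht.le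
    _ = c * (‖w‖ * F z) := by ring
    _ = c * F (‖w‖ • z) := by rw [hF.homog ‖w‖ ht z]
    _ = c * F w := by rw [← hwz]
  have hxz₀ : ⟪x, z₀⟫ = c * F z₀ := by
    rw [div_eq_iff hFz₀.ne'] at heq
    linarith
  set H : Euc n → ℝ := fun w => c * F w - (innerSL ℝ x) w with hH
  have hH0 : H z₀ = 0 := by
    simp only [hH, innerSL_apply_apply]
    rw [hxz₀]; ring
  have hmin : IsLocalMin H z₀ := by
    have hnhds : ({(0 : Euc n)}ᶜ : Set (Euc n)) ∈ nhds z₀ :=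
      isOpen_compl_singleton.mem_nhds (by simpa using aniso_sphere_ne_zero hz₀)
    filter_upwards [hnhds] with w hw
    rw [hH0]
    have := bound w (by simpa using hw)
    simp only [hH, innerSL_apply_apply]
    linarith
  have hdF : DifferentiableAt ℝ F z₀ := by
    have : ContDiffAt ℝ (⊤ : ℕ∞) F z₀ := hF.smooth.contDiffAt
      (isOpen_compl_singleton.mem_nhds (by simpa using aniso_sphere_ne_zero hz₀))
    exact this.differentiableAt (by simp)
  have h0 : fderiv ℝ H z₀ = 0 := hmin.fderiv_eq_zero
  have hcomp : fderiv ℝ H z₀ = c • fderiv ℝ F z₀ - innerSL ℝ x := by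
    rw [hH]
    rw [fderiv_fun_sub (hdF.const_mul c) (innerSL ℝ x).differentiableAt,
      fderiv_const_mul hdF c, (innerSL ℝ x).fderiv]
  rw [hcomp] at h0
  rw [sub_eq_zero] at h0
  exact h0.symm

/-- Equality in the triangle inequality for `F*` holds iff `x = 0`, `y = 0`,
or `x = k·y` for some `k > 0`. -/
theorem stmt_3 {n : ℕ} (F : Euc n → ℝ) (hF : IsAnisoNorm F) (x y : Euc n) :
    dualF F (x + y) = dualF F x + dualF F y ↔
      x = 0 ∨ y = 0 ∨ ∃ k : ℝ, 0 < k ∧ x = k • y := by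
  constructor
  · intro h
    by_cases hx : x = 0
    · exact Or.inl hx
    by_cases hy : y = 0
    · exact Or.inr (Or.inl hy)
    refine Or.inr (Or.inr ?_)
    obtain ⟨z₀, hz₀, heq, _⟩ := aniso_exists_max hF (x + y)
    obtain ⟨_, _, _, hbx⟩ := aniso_exists_max hF x
    obtain ⟨_, _, _, hby⟩ := aniso_exists_max hF y
    have hsplit : ⟪x + y, z₀⟫ / F z₀ = ⟪x, z₀⟫ / F z₀ + ⟪y, z₀⟫ / F z₀ := by
      rw [inner_add_left, add_div]
    have h1 := hbx z₀ hz₀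
    have h2 := hby z₀ hz₀
    have ex : ⟪x, z₀⟫ / F z₀ = dualF F x := by
      rw [heq, hsplit] at h
      linarith
    have ey : ⟪y, z₀⟫ / F z₀ = dualF F y := by
      rw [heq, hsplit] at h
      linarith
    have hx' := aniso_lagrange hF hz₀ hbx ex
    have hy' := aniso_lagrange hF hz₀ hby ey
    have hc₁ : 0 < dualF F x := aniso_dual_pos hF hx
    have hc₂ : 0 < dualF F y := aniso_dual_pos hF hy
    refine ⟨dualF F x / dualF F y, div_pos hc₁ hc₂, ?_⟩
    apply ext_inner_right ℝ
    intro v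
    have e1 : ⟪x, v⟫ = dualF F x * fderiv ℝ F z₀ v := by
      have := DFunLike.congr_fun hx' v
      simpa using this
    have e2 : ⟪y, v⟫ = dualF F y * fderiv ℝ F z₀ v := by
      have := DFunLike.congr_fun hy' v
      simpa using this
    rw [real_inner_smul_left, e1, e2]
    field_simp
  · rintro (rfl | rfl | ⟨k, hk, rfl⟩)
    · rw [zero_add, aniso_dual_zero F, zero_add]
    · rw [add_zero, aniso_dual_zero F, add_zero]
    · have h1 : k • y + y = (k + 1) • y := by rw [add_smul, one_smul]
      rw [h1, aniso_dual_smul hF (by linarith) y, aniso_dual_smul hF hk y]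
      ring
end
end
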